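/- Let T ∈ (0,∞), p ∈ (1,∞), β ∈ (1/p, 1], let (θ^N)_{N∈ℕ} be partitions of [0,T] with limsup_{N→∞} d_max(θ^N) = 0, let (Ω,F,P) be a probability space, let (E,‖·‖_E) be a real Banach space, and let Y^N : [0,T]×Ω → E, N ∈ ℕ_0, be strongly measurable stochastic processes with continuous sample paths such that Y^0_0 ∈ L^p(P;E), |Y^0|_{C^β([0,T];L^p)} + sup_{N∈ℕ} [ (d_max(θ^N))^{−β} · sup_{t∈θ^N} ‖Y^0_t − Y^N_t‖_{L^p(P;E)} ] < ∞, and such that either sup_{N∈ℕ} |Y^N|_{C^β([0,T];L^p)} < ∞, or ( sup_{N∈ℕ} d_max(θ^N)/d_min(θ^N) < ∞ and for every N ∈ ℕ the process Y^N coincides with the piecewise affine linear interpolation [Y^N]_{θ^N} of its values at the nodes of θ^N ). Then for all α ∈ [0, β − 1/p) and ε ∈ (0,∞) it holds that sup_{N∈ℕ} [ ‖Y^N‖_{L^p(P;C^α([0,T],E))} + (d_max(θ^N))^{−(β−α−1/p−ε)} · ‖Y^0 − Y^N‖_{L^p(P;C^α([0,T],E))} ] < ∞. -/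

import Mathlib

open MeasureTheory ENNReal

/-- The Hölder seminorm (with exponent `r`) of `f` restricted to `[0,T]`,
with the supremum taken only over pairs whose distance lies in `A`. -/
noncomputable def holderSemiOnA {E : Type} [NormedAddCommGroup E]
    (T : ℝ) (A : Set ℝ) (r : ℝ) (f : ℝ → E) : ℝ≥0∞ :=
  ⨆ (s : ℝ) (t : ℝ) (_ : s ∈ Set.Icc (0:ℝ) T) (_ : t ∈ Set.Icc (0:ℝ) T)
    (_ : |s - t| ∈ A), (‖f s - f t‖₊ : ℝ≥0∞) / ENNReal.ofReal (|s - t| ^ r)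

/-- The Hölder seminorm (exponent `r`) of `f` on `[0,T]`. -/
noncomputable def holderSemiOn {E : Type} [NormedAddCommGroup E]
    (T : ℝ) (r : ℝ) (f : ℝ → E) : ℝ≥0∞ :=
  ⨆ (s : ℝ) (t : ℝ) (_ : s ∈ Set.Icc (0:ℝ) T) (_ : t ∈ Set.Icc (0:ℝ) T)
    (_ : s ≠ t), (‖f s - f t‖₊ : ℝ≥0∞) / ENNReal.ofReal (|s - t| ^ r)

/-- The supremum norm of `f` on `[0,T]`. -/
noncomputable def supNormOn {E : Type} [NormedAddCommGroup E]
    (T : ℝ) (f : ℝ → E) : ℝ≥0∞ :=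
  ⨆ (t : ℝ) (_ : t ∈ Set.Icc (0:ℝ) T), (‖f t‖₊ : ℝ≥0∞)

/-- The Hölder norm (exponent `r`) of `f` on `[0,T]`. -/
noncomputable def holderNormOn {E : Type} [NormedAddCommGroup E]
    (T : ℝ) (r : ℝ) (f : ℝ → E) : ℝ≥0∞ :=
  supNormOn T f + holderSemiOn T r f

/-- Hölder seminorm in time of a stochastic process, measured in `L^p(P;E)`. -/
noncomputable def lpHolderSemi {Ω E : Type} [MeasurableSpace Ω] [NormedAddCommGroup E]
    (P : Measure Ω) (T p r : ℝ) (X : ℝ → Ω → E) : ℝ≥0∞ :=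
  ⨆ (s : ℝ) (t : ℝ) (_ : s ∈ Set.Icc (0:ℝ) T) (_ : t ∈ Set.Icc (0:ℝ) T)
    (_ : s ≠ t),
    eLpNorm (fun ω => X s ω - X t ω) (ENNReal.ofReal p) P / ENNReal.ofReal (|s - t| ^ r)

/-- Supremum in time of the `L^p(P;E)`-norms of a stochastic process. -/
noncomputable def lpSupNorm {Ω E : Type} [MeasurableSpace Ω] [NormedAddCommGroup E]
    (P : Measure Ω) (T p : ℝ) (X : ℝ → Ω → E) : ℝ≥0∞ :=
  ⨆ (t : ℝ) (_ : t ∈ Set.Icc (0:ℝ) T), eLpNorm (X t) (ENNReal.ofReal p) P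

/-- Hölder norm in time of a stochastic process, measured in `L^p(P;E)`. -/
noncomputable def lpHolderNorm {Ω E : Type} [MeasurableSpace Ω] [NormedAddCommGroup E]
    (P : Measure Ω) (T p r : ℝ) (X : ℝ → Ω → E) : ℝ≥0∞ :=
  lpSupNorm P T p X + lpHolderSemi P T p r X

/-- The `L^p(P; C^r([0,T],E))`-norm of a stochastic process. -/
noncomputable def lpOfHolderNorm {Ω E : Type} [MeasurableSpace Ω] [NormedAddCommGroup E]
    (P : Measure Ω) (T p r : ℝ) (X : ℝ → Ω → E) : ℝ≥0∞ :=
  (∫⁻ ω, (holderNormOn T r (fun t => X t ω)) ^ p ∂P) ^ (1 / p)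

/-- Piecewise affine linear interpolation of `f` on the uniform grid
`{0, T/N, 2T/N, …, T}`. -/
noncomputable def uniformInterp {E : Type} [NormedAddCommGroup E] [NormedSpace ℝ E]
    (T : ℝ) (N : ℕ) (f : ℝ → E) : ℝ → E := fun t =>
  (((⌊t * N / T⌋ : ℝ) + 1) - t * N / T) • f (⌊t * N / T⌋ * T / N)
    + (t * N / T - (⌊t * N / T⌋ : ℝ)) • f ((⌊t * N / T⌋ + 1) * T / N)

/-- Maximal mesh size of the partition with nodes `θ 0 < θ 1 < … < θ K`. -/
noncomputable def dMax (K : ℕ) (θ : ℕ → ℝ) : ℝ := ⨆ j : Fin K, (θ (j + 1) - θ j)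

/-- Minimal mesh size of the partition with nodes `θ 0 < θ 1 < … < θ K`. -/
noncomputable def dMin (K : ℕ) (θ : ℕ → ℝ) : ℝ := ⨅ j : Fin K, (θ (j + 1) - θ j)

/-!
Kolmogorov's dyadic chaining bounds the `C^a` norm of a continuous path by its value at `0` and
`sup_n 2^(n a') max_k ‖f ((k + 1) T / 2^n) - f (k T / 2^n)‖` for any `a' ≥ a`; when
`a' + 1/p < b`, the `L^p` norm of this quantity is dominated by a geometric series times the
`L^p`-Hölder seminorm of exponent `b`. With `b = β` this bounds `Y^N` uniformly as soon as
`|Y^N|_{C^β(L^p)}` is bounded: by assumption, or, for piecewise affine `Y^N` on partitions with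
`d_max ≤ c d_min`, because the node values of `Y^N` differ from those of `Y^0` by
`O(d_max^β) = O(|θ_i - θ_j|^β)`.

For the rate, the increments of `Y^0 - Y^N` are `O(|t - s|^β)` by the Hölder bounds and
`O(d_max^β)` by the node errors, so its `C^β'(L^p)` seminorm is `O(d_max^(β - β'))`; Kolmogorov
with `b = β'` slightly above `α + 1/p` turns this into the rate `β - α - 1/p - ε`.
-/

open Set Filter Topology

section HolderSemiOfIncr

/-- The common shape of `holderSemiOn` and `lpHolderSemi`, with `F s t` the size of the
increment between times `s` and `t`. -/
noncomputable def holderSemiOfIncr (T r : ℝ) (F : ℝ → ℝ → ℝ≥0∞) : ℝ≥0∞ :=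
  ⨆ (s : ℝ) (t : ℝ) (_ : s ∈ Icc (0:ℝ) T) (_ : t ∈ Icc (0:ℝ) T) (_ : s ≠ t),
    F s t / ENNReal.ofReal (|s - t| ^ r)

variable {T r : ℝ} {F : ℝ → ℝ → ℝ≥0∞}

theorem le_holderSemiOfIncr_mul (hF : ∀ s, F s s = 0) {s t : ℝ} (hs : s ∈ Icc 0 T)
    (ht : t ∈ Icc 0 T) : F s t ≤ holderSemiOfIncr T r F * ENNReal.ofReal (|s - t| ^ r) := by
  rcases eq_or_ne s t with rfl | hst
  · simp [hF]
  have hpos : 0 < |s - t| ^ r := Real.rpow_pos_of_pos (abs_sub_pos.2 hst) r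
  rw [← ENNReal.div_le_iff (by simpa using hpos) ofReal_ne_top]
  exact le_iSup_of_le s <| le_iSup_of_le t <| le_iSup_of_le hs <| le_iSup_of_le ht <|
    le_iSup_of_le hst le_rfl

theorem holderSemiOfIncr_le {C : ℝ≥0∞} (hF : ∀ s t, F s t = F t s)
    (h : ∀ s ∈ Icc 0 T, ∀ t ∈ Icc 0 T, s < t → F s t ≤ C * ENNReal.ofReal ((t - s) ^ r)) :
    holderSemiOfIncr T r F ≤ C := by
  refine iSup_le fun s => iSup_le fun t => iSup_le fun hs => iSup_le fun ht =>
    iSup_le fun hst => ?_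
  wlog hlt : s < t generalizing s t
  · rw [hF, abs_sub_comm]
    exact this t s ht hs hst.symm (hst.lt_or_gt.resolve_left hlt)
  have hpos : 0 < (t - s) ^ r := Real.rpow_pos_of_pos (sub_pos.2 hlt) r
  rw [abs_sub_comm, abs_of_pos (sub_pos.2 hlt),
    ENNReal.div_le_iff (by simpa using hpos) ofReal_ne_top]
  exact h s hs t ht hlt

end HolderSemiOfIncr

section HolderSeminorms

variable {Ω E : Type} [MeasurableSpace Ω] [NormedAddCommGroup E] {P : Measure Ω} {T p r : ℝ}

theorem enorm_sub_le_holderSemiOn_mul (f : ℝ → E) {s t : ℝ} (hs : s ∈ Icc 0 T)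
    (ht : t ∈ Icc 0 T) : ‖f s - f t‖ₑ ≤ holderSemiOn T r f * ENNReal.ofReal (|s - t| ^ r) :=
  le_holderSemiOfIncr_mul (F := fun s t => ‖f s - f t‖ₑ) (by simp) hs ht

theorem holderSemiOn_le_of_forall_lt {f : ℝ → E} {C : ℝ≥0∞}
    (h : ∀ s ∈ Icc 0 T, ∀ t ∈ Icc 0 T, s < t → ‖f t - f s‖ₑ ≤ C * ENNReal.ofReal ((t - s) ^ r)) :
    holderSemiOn T r f ≤ C :=
  holderSemiOfIncr_le (F := fun s t => ‖f s - f t‖ₑ) (fun _ _ => enorm_sub_rev _ _)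
    fun s hs t ht hst => (enorm_sub_rev _ _).trans_le (h s hs t ht hst)

theorem eLpNorm_sub_le_lpHolderSemi_mul (X : ℝ → Ω → E) {s t : ℝ} (hs : s ∈ Icc 0 T)
    (ht : t ∈ Icc 0 T) :
    eLpNorm (X s - X t) (ENNReal.ofReal p) P
      ≤ lpHolderSemi P T p r X * ENNReal.ofReal (|s - t| ^ r) :=
  le_holderSemiOfIncr_mul (F := fun s t => eLpNorm (X s - X t) (ENNReal.ofReal p) P)
    (by simp) hs ht

theorem lpHolderSemi_le_of_forall_lt {X : ℝ → Ω → E} {C : ℝ≥0∞}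
    (h : ∀ s ∈ Icc 0 T, ∀ t ∈ Icc 0 T, s < t →
      eLpNorm (X t - X s) (ENNReal.ofReal p) P ≤ C * ENNReal.ofReal ((t - s) ^ r)) :
    lpHolderSemi P T p r X ≤ C :=
  holderSemiOfIncr_le (F := fun s t => eLpNorm (X s - X t) (ENNReal.ofReal p) P)
    (fun s t => by rw [← eLpNorm_neg, neg_sub])
    fun s hs t ht hst => by rw [← eLpNorm_neg, neg_sub]; exact h s hs t ht hst

theorem lpHolderSemi_sub_le (hp : 1 ≤ p) {X Y : ℝ → Ω → E}
    (hX : ∀ t ∈ Icc 0 T, AEStronglyMeasurable (X t) P)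
    (hY : ∀ t ∈ Icc 0 T, AEStronglyMeasurable (Y t) P) :
    lpHolderSemi P T p r (X - Y) ≤ lpHolderSemi P T p r X + lpHolderSemi P T p r Y := by
  refine lpHolderSemi_le_of_forall_lt fun s hs t ht hst => ?_
  have hts : |t - s| = t - s := abs_of_pos (sub_pos.2 hst)
  calc eLpNorm ((X - Y) t - (X - Y) s) (ENNReal.ofReal p) P
      = eLpNorm ((X t - X s) - (Y t - Y s)) (ENNReal.ofReal p) P := by
        rw [Pi.sub_apply, Pi.sub_apply, sub_sub_sub_comm]
    _ ≤ eLpNorm (X t - X s) (ENNReal.ofReal p) P + eLpNorm (Y t - Y s) (ENNReal.ofReal p) P :=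
        eLpNorm_sub_le ((hX t ht).sub (hX s hs)) ((hY t ht).sub (hY s hs)) (by simpa using hp)
    _ ≤ _ := by
        rw [add_mul, ← hts]
        exact add_le_add (eLpNorm_sub_le_lpHolderSemi_mul X ht hs)
          (eLpNorm_sub_le_lpHolderSemi_mul Y ht hs)

end HolderSeminorms

theorem eLpNorm_sub_le_add_sub {α F : Type*} [MeasurableSpace α] [NormedAddCommGroup F]
    {μ : Measure α} {q : ℝ≥0∞} {f g h : α → F} (hf : AEStronglyMeasurable f μ)
    (hg : AEStronglyMeasurable g μ) (hh : AEStronglyMeasurable h μ) (hq : 1 ≤ q) :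
    eLpNorm (f - h) q μ ≤ eLpNorm (f - g) q μ + eLpNorm (g - h) q μ := by
  simpa using eLpNorm_add_le (hf.sub hg) (hg.sub hh) hq

structure IsPartition (T : ℝ) (K : ℕ) (θ : ℕ → ℝ) : Prop where
  one_le : 1 ≤ K
  zero : θ 0 = 0
  last : θ K = T
  lt_succ : ∀ j, j < K → θ j < θ (j + 1)

theorem sub_le_dMax {K j : ℕ} (θ : ℕ → ℝ) (hj : j < K) : θ (j + 1) - θ j ≤ dMax K θ :=
  le_ciSup (f := fun j : Fin K => θ (j + 1) - θ j) (finite_range _).bddAbove ⟨j, hj⟩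

theorem dMin_le_sub {K j : ℕ} (θ : ℕ → ℝ) (hj : j < K) : dMin K θ ≤ θ (j + 1) - θ j :=
  ciInf_le (f := fun j : Fin K => θ (j + 1) - θ j) (finite_range _).bddBelow ⟨j, hj⟩

namespace IsPartition

variable {T : ℝ} {K : ℕ} {θ : ℕ → ℝ}

theorem monotone (hθ : IsPartition T K θ) {i j : ℕ} (hij : i ≤ j) (hj : j ≤ K) :
    θ i ≤ θ j := by
  have hmono : Monotone fun n => θ (min n K) := monotone_nat_of_le_succ fun n => by
    rcases lt_or_ge n K with hn | hn
    · simpa [min_eq_left hn.le, min_eq_left (Nat.succ_le_of_lt hn)] using (hθ.lt_succ n hn).le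
    · simp [min_eq_right hn, min_eq_right (hn.trans n.le_succ)]
  simpa [min_eq_left (hij.trans hj), min_eq_left hj] using hmono hij

theorem mem_Icc (hθ : IsPartition T K θ) {j : ℕ} (hj : j ≤ K) : θ j ∈ Icc 0 T :=
  ⟨hθ.zero ▸ hθ.monotone (Nat.zero_le j) hj, hθ.last ▸ hθ.monotone hj le_rfl⟩

theorem dMin_le_sub_of_lt (hθ : IsPartition T K θ) {i j : ℕ} (hij : i < j) (hj : j ≤ K) :
    dMin K θ ≤ θ j - θ i := by
  linarith [dMin_le_sub θ (hij.trans_le hj), hθ.monotone (Nat.succ_le_of_lt hij) hj]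

theorem dMin_pos (hθ : IsPartition T K θ) : 0 < dMin K θ := by
  have : Nonempty (Fin K) := ⟨⟨0, hθ.one_le⟩⟩
  obtain ⟨j, hj⟩ := Finite.exists_min fun j : Fin K => θ (j + 1) - θ j
  exact (sub_pos.2 (hθ.lt_succ j j.2)).trans_le (le_ciInf hj)

theorem dMax_pos (hθ : IsPartition T K θ) : 0 < dMax K θ :=
  hθ.dMin_pos.trans_le ((dMin_le_sub θ hθ.one_le).trans (sub_le_dMax θ hθ.one_le))

theorem dMax_le (hθ : IsPartition T K θ) : dMax K θ ≤ T := by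
  have : Nonempty (Fin K) := ⟨⟨0, hθ.one_le⟩⟩
  refine ciSup_le fun j => ?_
  have h1 := (hθ.mem_Icc (Nat.succ_le_of_lt j.2)).2
  have h2 := (hθ.mem_Icc j.2.le).1
  linarith

theorem exists_cell (hθ : IsPartition T K θ) {u : ℝ} (hu : u ∈ Icc 0 T) :
    ∃ j < K, θ j ≤ u ∧ u ≤ θ (j + 1) := by
  classical
  have hlast : u ≤ θ (K - 1 + 1) := by rw [Nat.sub_add_cancel hθ.one_le, hθ.last]; exact hu.2
  have hex : ∃ j, u ≤ θ (j + 1) := ⟨K - 1, hlast⟩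
  refine ⟨Nat.find hex, ?_, ?_, Nat.find_spec hex⟩
  · exact (Nat.find_le hlast).trans_lt (Nat.sub_lt hθ.one_le one_pos)
  · rcases Nat.eq_zero_or_eq_succ_pred (Nat.find hex) with h | h
    · rw [h, hθ.zero]; exact hu.1
    · rw [h]; exact (not_le.1 (Nat.find_min hex (h ▸ Nat.pred_lt_self (by omega)))).le

end IsPartition

theorem rpow_le_rpow_sub_mul_rpow {x d δ β β' : ℝ} (hx : 0 ≤ x) (hxd : x ≤ d) (hxδ : x ≤ δ)
    (hβ' : 0 < β') (hβ'β : β' ≤ β) : x ^ β ≤ d ^ (β - β') * δ ^ β' := by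
  calc x ^ β = x ^ (β - β') * x ^ β' := by
        rw [← Real.rpow_add' hx (by linarith)]; ring_nf
    _ ≤ d ^ (β - β') * δ ^ β' :=
        mul_le_mul (Real.rpow_le_rpow hx hxd (by linarith)) (Real.rpow_le_rpow hx hxδ hβ'.le)
          (by positivity) (Real.rpow_nonneg (hx.trans hxd) _)

section SmallAtNodes

variable {Ω E : Type} [MeasurableSpace Ω] [NormedAddCommGroup E] {P : Measure Ω}
  {T p β : ℝ} {K : ℕ} {θ : ℕ → ℝ} {Z : ℝ → Ω → E} {H Λ : ℝ≥0∞}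

theorem eLpNorm_le_of_small_at_nodes (hθ : IsPartition T K θ) (hp : 1 ≤ p) (hβ : 0 ≤ β)
    (hZ : ∀ t ∈ Icc 0 T, AEStronglyMeasurable (Z t) P)
    (hpair : ∀ s ∈ Icc 0 T, ∀ t ∈ Icc 0 T,
      eLpNorm (Z s - Z t) (ENNReal.ofReal p) P ≤ H * ENNReal.ofReal (|s - t| ^ β))
    (hnode : ∀ j ≤ K, eLpNorm (Z (θ j)) (ENNReal.ofReal p) P
      ≤ Λ * ENNReal.ofReal (dMax K θ ^ β))
    (u : ℝ) (hu : u ∈ Icc 0 T) :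
    eLpNorm (Z u) (ENNReal.ofReal p) P ≤ (H + Λ) * ENNReal.ofReal (dMax K θ ^ β) := by
  obtain ⟨j, hjK, hju, hu'⟩ := hθ.exists_cell hu
  have hj := hθ.mem_Icc hjK.le
  have hdist : |u - θ j| ≤ dMax K θ := by
    rw [abs_of_nonneg (sub_nonneg.2 hju)]
    linarith [sub_le_dMax θ hjK]
  calc eLpNorm (Z u) (ENNReal.ofReal p) P
      ≤ eLpNorm (Z u - Z (θ j)) (ENNReal.ofReal p) P
        + eLpNorm (Z (θ j)) (ENNReal.ofReal p) P := by
        simpa using eLpNorm_add_le ((hZ u hu).sub (hZ _ hj)) (hZ _ hj) (by simpa using hp)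
    _ ≤ H * ENNReal.ofReal (dMax K θ ^ β) + Λ * ENNReal.ofReal (dMax K θ ^ β) := by
        gcongr
        · exact (hpair u hu _ hj).trans (by gcongr)
        · exact hnode j hjK.le
    _ = (H + Λ) * ENNReal.ofReal (dMax K θ ^ β) := by ring

theorem lpHolderSemi_le_of_small_at_nodes (hθ : IsPartition T K θ) (hp : 1 ≤ p)
    {β' : ℝ} (hβ' : 0 < β') (hβ'β : β' ≤ β)
    (hZ : ∀ t ∈ Icc 0 T, AEStronglyMeasurable (Z t) P)
    (hpair : ∀ s ∈ Icc 0 T, ∀ t ∈ Icc 0 T,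
      eLpNorm (Z s - Z t) (ENNReal.ofReal p) P ≤ H * ENNReal.ofReal (|s - t| ^ β))
    (hnode : ∀ j ≤ K, eLpNorm (Z (θ j)) (ENNReal.ofReal p) P
      ≤ Λ * ENNReal.ofReal (dMax K θ ^ β)) :
    lpHolderSemi P T p β' Z ≤ 2 * (H + Λ) * ENNReal.ofReal (dMax K θ ^ (β - β')) := by
  have hβ : 0 ≤ β := by linarith
  refine lpHolderSemi_le_of_forall_lt fun s hs t ht hst => ?_
  set d := dMax K θ
  have hsup := eLpNorm_le_of_small_at_nodes hθ hp hβ hZ hpair hnode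
  have hmin : eLpNorm (Z t - Z s) (ENNReal.ofReal p) P
      ≤ 2 * (H + Λ) * ENNReal.ofReal (min (t - s) d ^ β) := by
    rcases le_total (t - s) d with h | h
    · rw [min_eq_left h]
      calc eLpNorm (Z t - Z s) (ENNReal.ofReal p) P ≤ H * ENNReal.ofReal ((t - s) ^ β) := by
            simpa [abs_of_pos (sub_pos.2 hst)] using hpair t ht s hs
        _ ≤ 2 * (H + Λ) * ENNReal.ofReal ((t - s) ^ β) := by
            gcongr
            exact le_self_add.trans (le_mul_of_one_le_left' one_le_two)
    · rw [min_eq_right h]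
      calc eLpNorm (Z t - Z s) (ENNReal.ofReal p) P
          ≤ eLpNorm (Z t) (ENNReal.ofReal p) P + eLpNorm (Z s) (ENNReal.ofReal p) P :=
            eLpNorm_sub_le (hZ t ht) (hZ s hs) (by simpa using hp)
        _ ≤ 2 * (H + Λ) * ENNReal.ofReal (d ^ β) := by
            rw [mul_assoc, two_mul]; exact add_le_add (hsup t ht) (hsup s hs)
  refine hmin.trans ?_
  rw [mul_assoc _ (ENNReal.ofReal _),
    ← ENNReal.ofReal_mul (Real.rpow_nonneg hθ.dMax_pos.le _)]
  gcongr
  exact rpow_le_rpow_sub_mul_rpow (le_min (by linarith) hθ.dMax_pos.le) (min_le_right _ _)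
    (min_le_left _ _) hβ' hβ'β

end SmallAtNodes

section PiecewiseAffine

variable {T β : ℝ} {K : ℕ} {θ : ℕ → ℝ} {ρ : ℝ → ℝ → ℝ≥0∞} {M : ℝ≥0∞}

theorem le_mul_rpow_of_affine_on_cell (hθ : IsPartition T K θ) (hβ1 : β ≤ 1)
    (hcell : ∀ j < K, ∀ s t, θ j ≤ s → s ≤ t → t ≤ θ (j + 1) →
      ρ s t = ENNReal.ofReal ((t - s) / (θ (j + 1) - θ j)) * ρ (θ j) (θ (j + 1)))
    (hnode : ∀ j < K,
      ρ (θ j) (θ (j + 1)) ≤ M * ENNReal.ofReal ((θ (j + 1) - θ j) ^ β))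
    (j : ℕ) (hj : j < K) (s t : ℝ) (hs : θ j ≤ s) (hst : s ≤ t) (ht : t ≤ θ (j + 1)) :
    ρ s t ≤ M * ENNReal.ofReal ((t - s) ^ β) := by
  have hΔ : 0 < θ (j + 1) - θ j := sub_pos.2 (hθ.lt_succ j hj)
  set r := (t - s) / (θ (j + 1) - θ j)
  have hr0 : 0 ≤ r := div_nonneg (sub_nonneg.2 hst) hΔ.le
  have hr1 : r ≤ 1 := (div_le_one hΔ).2 (by linarith)
  have hscale : r * (θ (j + 1) - θ j) ^ β ≤ (t - s) ^ β :=
    calc r * (θ (j + 1) - θ j) ^ β ≤ r ^ β * (θ (j + 1) - θ j) ^ β := by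
          gcongr; exact Real.self_le_rpow_of_le_one hr0 hr1 hβ1
      _ = (t - s) ^ β := by
          rw [← Real.mul_rpow hr0 hΔ.le, div_mul_cancel₀ _ hΔ.ne']
  calc ρ s t = ENNReal.ofReal r * ρ (θ j) (θ (j + 1)) := hcell j hj s t hs hst ht
    _ ≤ ENNReal.ofReal r * (M * ENNReal.ofReal ((θ (j + 1) - θ j) ^ β)) := by
        gcongr; exact hnode j hj
    _ = M * ENNReal.ofReal (r * (θ (j + 1) - θ j) ^ β) := by
        rw [ENNReal.ofReal_mul hr0]; ring
    _ ≤ M * ENNReal.ofReal ((t - s) ^ β) := by gcongr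

theorem le_mul_rpow_of_piecewise_affine (hθ : IsPartition T K θ) (hβ0 : 0 ≤ β) (hβ1 : β ≤ 1)
    (htri : ∀ s ∈ Icc 0 T, ∀ u ∈ Icc 0 T, ∀ t ∈ Icc 0 T, ρ s t ≤ ρ s u + ρ u t)
    (hcell : ∀ j < K, ∀ s t, θ j ≤ s → s ≤ t → t ≤ θ (j + 1) →
      ρ s t = ENNReal.ofReal ((t - s) / (θ (j + 1) - θ j)) * ρ (θ j) (θ (j + 1)))
    (hnode : ∀ i j, i < j → j ≤ K → ρ (θ i) (θ j) ≤ M * ENNReal.ofReal ((θ j - θ i) ^ β))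
    {s t : ℝ} (hs : s ∈ Icc 0 T) (ht : t ∈ Icc 0 T) (hst : s ≤ t) :
    ρ s t ≤ 3 * M * ENNReal.ofReal ((t - s) ^ β) := by
  have hcell' := le_mul_rpow_of_affine_on_cell hθ hβ1 hcell fun j hj => hnode j _ j.lt_succ_self hj
  have hM : M * ENNReal.ofReal ((t - s) ^ β) ≤ 3 * M * ENNReal.ofReal ((t - s) ^ β) := by
    rw [mul_assoc]; exact le_mul_of_one_le_left' (by norm_num)
  obtain ⟨i, hiK, his, hsi⟩ := hθ.exists_cell hs
  obtain ⟨j, hjK, hjt, htj⟩ := hθ.exists_cell ht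
  rcases lt_trichotomy i j with hij | rfl | hji
  · have hi1 : θ (i + 1) ≤ θ j := hθ.monotone hij hjK.le
    have hmid : ρ (θ (i + 1)) (θ j) ≤ M * ENNReal.ofReal ((θ j - θ (i + 1)) ^ β) := by
      rcases (Nat.succ_le_of_lt hij).lt_or_eq with hlt | heq
      · exact hnode _ _ hlt hjK.le
      · subst heq; exact hcell' _ hjK _ _ le_rfl le_rfl (hθ.monotone (i + 1).le_succ hjK)
    have hi1T := hθ.mem_Icc (Nat.succ_le_of_lt hiK)
    calc ρ s t ≤ ρ s (θ (i + 1)) + (ρ (θ (i + 1)) (θ j) + ρ (θ j) t) :=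
          (htri s hs _ hi1T t ht).trans
            (add_le_add le_rfl (htri _ hi1T _ (hθ.mem_Icc hjK.le) t ht))
      _ ≤ M * ENNReal.ofReal ((t - s) ^ β)
            + (M * ENNReal.ofReal ((t - s) ^ β) + M * ENNReal.ofReal ((t - s) ^ β)) := by
          gcongr
          · exact (hcell' i hiK _ _ his hsi le_rfl).trans (by gcongr; linarith)
          · exact hmid.trans (by gcongr)
          · exact (hcell' j hjK _ _ le_rfl hjt htj).trans (by gcongr; linarith)
      _ = 3 * M * ENNReal.ofReal ((t - s) ^ β) := by ring
  · exact (hcell' i hiK _ _ his hst htj).trans hM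
  · have hts : t = s := le_antisymm (htj.trans ((hθ.monotone hji hiK.le).trans his)) hst
    subst hts
    exact (hcell' i hiK _ _ his le_rfl hsi).trans hM

end PiecewiseAffine

section PiecewiseAffineProcess

variable {Ω E : Type} [MeasurableSpace Ω] [NormedAddCommGroup E] {P : Measure Ω}
  {T p β : ℝ} {K : ℕ} {θ : ℕ → ℝ} {X Y : ℝ → Ω → E} {H Λ : ℝ≥0∞}

theorem eLpNorm_node_sub_le_of_close (hθ : IsPartition T K θ) (hp : 1 ≤ p) (hβ : 0 ≤ β)
    {c : ℝ} (hc : dMax K θ / dMin K θ ≤ c)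
    (hX : ∀ t ∈ Icc 0 T, AEStronglyMeasurable (X t) P)
    (hY : ∀ t ∈ Icc 0 T, AEStronglyMeasurable (Y t) P)
    (hXpair : ∀ s ∈ Icc 0 T, ∀ t ∈ Icc 0 T,
      eLpNorm (X s - X t) (ENNReal.ofReal p) P ≤ H * ENNReal.ofReal (|s - t| ^ β))
    (hnode : ∀ j ≤ K, eLpNorm (X (θ j) - Y (θ j)) (ENNReal.ofReal p) P
      ≤ Λ * ENNReal.ofReal (dMax K θ ^ β))
    {i j : ℕ} (hij : i < j) (hj : j ≤ K) :
    eLpNorm (Y (θ j) - Y (θ i)) (ENNReal.ofReal p) P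
      ≤ (H + 2 * Λ * ENNReal.ofReal (c ^ β)) * ENNReal.ofReal ((θ j - θ i) ^ β) := by
  have hp' : 1 ≤ ENNReal.ofReal p := by simpa using hp
  have hi := hθ.mem_Icc (hij.le.trans hj)
  have hj' := hθ.mem_Icc hj
  have hgap : 0 < θ j - θ i := hθ.dMin_pos.trans_le (hθ.dMin_le_sub_of_lt hij hj)
  have hc0 : 0 ≤ c := (div_pos hθ.dMax_pos hθ.dMin_pos).le.trans hc
  have hmesh : dMax K θ ^ β ≤ c ^ β * (θ j - θ i) ^ β := by
    have h : dMax K θ ≤ c * (θ j - θ i) :=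
      calc dMax K θ ≤ c * dMin K θ := (div_le_iff₀ hθ.dMin_pos).1 hc
        _ ≤ c * (θ j - θ i) := by gcongr; exact hθ.dMin_le_sub_of_lt hij hj
    rw [← Real.mul_rpow hc0 hgap.le]
    exact Real.rpow_le_rpow hθ.dMax_pos.le h hβ
  calc eLpNorm (Y (θ j) - Y (θ i)) (ENNReal.ofReal p) P
      ≤ eLpNorm (Y (θ j) - X (θ j)) (ENNReal.ofReal p) P
        + (eLpNorm (X (θ j) - X (θ i)) (ENNReal.ofReal p) P
          + eLpNorm (X (θ i) - Y (θ i)) (ENNReal.ofReal p) P) := by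
        refine (eLpNorm_sub_le_add_sub (hY _ hj') (hX _ hj') (hY _ hi) hp').trans ?_
        gcongr
        exact eLpNorm_sub_le_add_sub (hX _ hj') (hX _ hi) (hY _ hi) hp'
    _ ≤ Λ * ENNReal.ofReal (dMax K θ ^ β) + (H * ENNReal.ofReal ((θ j - θ i) ^ β)
          + Λ * ENNReal.ofReal (dMax K θ ^ β)) := by
        gcongr
        · rw [← eLpNorm_neg, neg_sub]; exact hnode j hj
        · simpa [abs_of_pos hgap] using hXpair _ hj' _ hi
        · exact hnode i (hij.le.trans hj)
    _ = H * ENNReal.ofReal ((θ j - θ i) ^ β) + 2 * Λ * ENNReal.ofReal (dMax K θ ^ β) := by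
        ring
    _ ≤ H * ENNReal.ofReal ((θ j - θ i) ^ β)
          + 2 * Λ * (ENNReal.ofReal (c ^ β) * ENNReal.ofReal ((θ j - θ i) ^ β)) := by
        rw [← ENNReal.ofReal_mul (by positivity)]
        gcongr
    _ = (H + 2 * Λ * ENNReal.ofReal (c ^ β)) * ENNReal.ofReal ((θ j - θ i) ^ β) := by ring

theorem lpHolderSemi_le_of_piecewise_affine [NormedSpace ℝ E] (hθ : IsPartition T K θ)
    (hp : 1 ≤ p) (hβ0 : 0 ≤ β) (hβ1 : β ≤ 1) {c : ℝ} (hc : dMax K θ / dMin K θ ≤ c)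
    (hX : ∀ t ∈ Icc 0 T, AEStronglyMeasurable (X t) P)
    (hY : ∀ t ∈ Icc 0 T, AEStronglyMeasurable (Y t) P)
    (hXpair : ∀ s ∈ Icc 0 T, ∀ t ∈ Icc 0 T,
      eLpNorm (X s - X t) (ENNReal.ofReal p) P ≤ H * ENNReal.ofReal (|s - t| ^ β))
    (hnode : ∀ j ≤ K, eLpNorm (X (θ j) - Y (θ j)) (ENNReal.ofReal p) P
      ≤ Λ * ENNReal.ofReal (dMax K θ ^ β))
    (haff : ∀ ω, ∀ j, j < K → ∀ s ∈ Icc (θ j) (θ (j + 1)),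
      Y s ω = ((θ (j + 1) - s) / (θ (j + 1) - θ j)) • Y (θ j) ω
        + ((s - θ j) / (θ (j + 1) - θ j)) • Y (θ (j + 1)) ω) :
    lpHolderSemi P T p β Y ≤ 3 * (H + 2 * Λ * ENNReal.ofReal (c ^ β)) := by
  have hp' : 1 ≤ ENNReal.ofReal p := by simpa using hp
  refine lpHolderSemi_le_of_forall_lt fun s hs t ht hst => ?_
  refine le_mul_rpow_of_piecewise_affine
    (ρ := fun s t => eLpNorm (Y t - Y s) (ENNReal.ofReal p) P)
    hθ hβ0 hβ1 (fun a ha u hu b hb => ?_) (fun j hj a b ha hab hb => ?_)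
    (fun i j hij hj => eLpNorm_node_sub_le_of_close hθ hp hβ0 hc hX hY hXpair hnode hij hj)
    hs ht hst.le
  · rw [add_comm]
    exact eLpNorm_sub_le_add_sub (hY b hb) (hY u hu) (hY a ha) hp'
  · have hΔ : 0 < θ (j + 1) - θ j := sub_pos.2 (hθ.lt_succ j hj)
    have hlin : Y b - Y a = ((b - a) / (θ (j + 1) - θ j)) • (Y (θ (j + 1)) - Y (θ j)) := by
      funext ω
      simp only [Pi.sub_apply, Pi.smul_apply, haff ω j hj a ⟨ha, hab.trans hb⟩,
        haff ω j hj b ⟨ha.trans hab, hb⟩]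
      module
    simp only [hlin, eLpNorm_const_smul,
      Real.enorm_of_nonneg (div_nonneg (sub_nonneg.2 hab) hΔ.le)]

end PiecewiseAffineProcess

section DyadicChaining

variable {E : Type} [NormedAddCommGroup E] {T : ℝ}

noncomputable def dyadicIncr (T : ℝ) (n : ℕ) (f : ℝ → E) : ℝ≥0∞ :=
  ⨆ k : Fin (2 ^ n), ‖f ((k + 1) * T / 2 ^ n) - f (k * T / 2 ^ n)‖ₑ

noncomputable def dyadicHolder (T a : ℝ) (f : ℝ → E) : ℝ≥0∞ :=
  ⨆ n : ℕ, (2 : ℝ≥0∞) ^ (a * n) * dyadicIncr T n f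

noncomputable def dyadicFloor (T : ℝ) (n : ℕ) (u : ℝ) : ℝ := ⌊u * 2 ^ n / T⌋₊ * T / 2 ^ n

theorem enorm_sub_le_dyadicIncr (f : ℝ → E) {n k l : ℕ} (hkl : k ≤ l) (hlk : l ≤ k + 1)
    (hl : l ≤ 2 ^ n) : ‖f (l * T / 2 ^ n) - f (k * T / 2 ^ n)‖ₑ ≤ dyadicIncr T n f := by
  rcases hlk.lt_or_eq with hlt | rfl
  · obtain rfl : l = k := by omega
    simp
  · exact le_iSup_of_le ⟨k, hl⟩ (by push_cast; rfl)

theorem dyadicFloor_le (hT : 0 < T) (n : ℕ) {u : ℝ} (hu : 0 ≤ u) : dyadicFloor T n u ≤ u := by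
  rw [dyadicFloor, div_le_iff₀ (by positivity), ← le_div_iff₀ hT]
  exact Nat.floor_le (by positivity)

theorem lt_dyadicFloor_add (hT : 0 < T) (n : ℕ) (u : ℝ) :
    u < dyadicFloor T n u + T / 2 ^ n := by
  rw [dyadicFloor, ← add_div, ← add_one_mul, lt_div_iff₀ (by positivity), ← div_lt_iff₀ hT]
  exact Nat.lt_floor_add_one _

theorem floor_mul_two_pow_div_le (hT : 0 < T) (n : ℕ) {u : ℝ} (hu : u ≤ T) :
    ⌊u * 2 ^ n / T⌋₊ ≤ 2 ^ n := by
  refine Nat.floor_le_of_le ?_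
  rw [div_le_iff₀ hT]
  push_cast
  nlinarith [pow_pos (two_pos : (0 : ℝ) < 2) n]

theorem enorm_dyadicFloor_succ_sub_le (hT : 0 < T) (f : ℝ → E) (n : ℕ) {u : ℝ}
    (hu : u ∈ Icc 0 T) :
    ‖f (dyadicFloor T (n + 1) u) - f (dyadicFloor T n u)‖ₑ ≤ dyadicIncr T (n + 1) f := by
  set m := ⌊u * 2 ^ (n + 1) / T⌋₊
  have hhalf : ⌊u * 2 ^ n / T⌋₊ = m / 2 := by
    rw [← Nat.floor_div_natCast]; congr 1; push_cast; ring
  have hcoarse : dyadicFloor T n u = ((2 * (m / 2) : ℕ) : ℝ) * T / 2 ^ (n + 1) := by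
    rw [dyadicFloor, hhalf]; push_cast; ring
  rw [hcoarse]
  exact enorm_sub_le_dyadicIncr f (by omega) (by omega) (floor_mul_two_pow_div_le hT _ hu.2)

theorem enorm_dyadicFloor_sub_le (hT : 0 < T) (f : ℝ → E) {n : ℕ} {s t : ℝ}
    (hs : s ∈ Icc 0 T) (ht : t ∈ Icc 0 T) (hst : s ≤ t) (hts : t - s ≤ T / 2 ^ n) :
    ‖f (dyadicFloor T n t) - f (dyadicFloor T n s)‖ₑ ≤ dyadicIncr T n f := by
  have h2 : (0 : ℝ) < 2 ^ n := by positivity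
  have hx : 0 ≤ s * 2 ^ n / T := by have := hs.1; positivity
  refine enorm_sub_le_dyadicIncr f (Nat.floor_le_floor (by gcongr)) ?_
    (floor_mul_two_pow_div_le hT n ht.2)
  rw [← Nat.floor_add_one hx]
  refine Nat.floor_le_floor ?_
  rw [div_add_one hT.ne', div_le_div_iff_of_pos_right hT]
  rw [le_div_iff₀ h2] at hts
  nlinarith

theorem dyadicFloor_mem_Icc (hT : 0 < T) (n : ℕ) {u : ℝ} (hu : u ∈ Icc 0 T) :
    dyadicFloor T n u ∈ Icc 0 T :=
  ⟨by unfold dyadicFloor; positivity, (dyadicFloor_le hT n hu.1).trans hu.2⟩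

theorem tendsto_dyadicFloor (hT : 0 < T) {u : ℝ} (hu : 0 ≤ u) :
    Tendsto (fun n => dyadicFloor T n u) atTop (𝓝 u) := by
  have hgrid : Tendsto (fun n : ℕ => u - T * ((2 : ℝ) ^ n)⁻¹) atTop (𝓝 (u - T * 0)) :=
    tendsto_const_nhds.sub ((tendsto_inv_atTop_zero.comp
      (tendsto_pow_atTop_atTop_of_one_lt (one_lt_two : (1 : ℝ) < 2))).const_mul T)
  rw [mul_zero, sub_zero] at hgrid
  refine tendsto_of_tendsto_of_tendsto_of_le_of_le hgrid tendsto_const_nhds (fun n => ?_)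
    (fun n => dyadicFloor_le hT n hu)
  have := lt_dyadicFloor_add hT n u
  rw [div_eq_mul_inv] at this
  linarith

theorem edist_dyadicFloor_le (hT : 0 < T) {f : ℝ → E} (hf : ContinuousOn f (Icc 0 T))
    {u : ℝ} (hu : u ∈ Icc 0 T) (n : ℕ) :
    edist (f (dyadicFloor T n u)) (f u) ≤ ∑' m, dyadicIncr T (n + m + 1) f := by
  refine edist_le_tsum_of_edist_le_of_tendsto (fun m => dyadicIncr T (m + 1) f) (fun m => ?_)
    ((hf u hu).tendsto.comp (tendsto_nhdsWithin_iff.2 ⟨tendsto_dyadicFloor hT hu.1,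
      Eventually.of_forall fun m => dyadicFloor_mem_Icc hT m hu⟩)) n
  rw [edist_comm, edist_eq_enorm_sub]
  exact enorm_dyadicFloor_succ_sub_le hT f m hu

theorem enorm_sub_le_two_mul_tsum_dyadicIncr (hT : 0 < T) {f : ℝ → E}
    (hf : ContinuousOn f (Icc 0 T)) {s t : ℝ} (hs : s ∈ Icc 0 T) (ht : t ∈ Icc 0 T)
    (hst : s ≤ t) {n : ℕ} (hts : t - s ≤ T / 2 ^ n) :
    ‖f t - f s‖ₑ ≤ 2 * ∑' m, dyadicIncr T (n + m) f := by
  have hsplit : ∑' m, dyadicIncr T (n + m) f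
      = dyadicIncr T n f + ∑' m, dyadicIncr T (n + m + 1) f :=
    tsum_eq_zero_add' ENNReal.summable
  rw [hsplit]
  calc ‖f t - f s‖ₑ
      ≤ edist (f t) (f (dyadicFloor T n t))
        + edist (f (dyadicFloor T n t)) (f (dyadicFloor T n s))
        + edist (f (dyadicFloor T n s)) (f s) := by
        rw [← edist_eq_enorm_sub]; exact edist_triangle4 _ _ _ _
    _ ≤ ∑' m, dyadicIncr T (n + m + 1) f + dyadicIncr T n f
        + ∑' m, dyadicIncr T (n + m + 1) f := by
        gcongr
        · rw [edist_comm]; exact edist_dyadicFloor_le hT hf ht n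
        · rw [edist_eq_enorm_sub]; exact enorm_dyadicFloor_sub_le hT f hs ht hst hts
        · exact edist_dyadicFloor_le hT hf hs n
    _ ≤ 2 * (dyadicIncr T n f + ∑' m, dyadicIncr T (n + m + 1) f) := by
        rw [two_mul, add_comm _ (dyadicIncr T n f)]
        exact add_le_add_right le_add_self _

theorem dyadicIncr_le_rpow_neg_mul (a : ℝ) (f : ℝ → E) (n : ℕ) :
    dyadicIncr T n f ≤ 2 ^ (-(a * n)) * dyadicHolder T a f := by
  calc dyadicIncr T n f = 2 ^ (-(a * n)) * (2 ^ (a * n) * dyadicIncr T n f) := by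
        rw [← mul_assoc, ← ENNReal.rpow_add _ _ two_ne_zero ofNat_ne_top, neg_add_cancel,
          rpow_zero, one_mul]
    _ ≤ 2 ^ (-(a * n)) * dyadicHolder T a f := by
        gcongr
        exact le_iSup (fun n : ℕ => (2 : ℝ≥0∞) ^ (a * n) * dyadicIncr T n f) n

theorem tsum_dyadicIncr_le (a : ℝ) (f : ℝ → E) (n : ℕ) :
    ∑' m, dyadicIncr T (n + m) f
      ≤ 2 ^ (-(a * n)) * (1 - 2 ^ (-a))⁻¹ * dyadicHolder T a f := by
  calc ∑' m, dyadicIncr T (n + m) f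
      ≤ ∑' m : ℕ, 2 ^ (-(a * n)) * (2 ^ (-a)) ^ m * dyadicHolder T a f := by
        refine ENNReal.tsum_le_tsum fun m =>
          (dyadicIncr_le_rpow_neg_mul a f (n + m)).trans_eq ?_
        rw [← rpow_natCast, ← rpow_mul, ← ENNReal.rpow_add _ _ two_ne_zero ofNat_ne_top]
        push_cast; ring_nf
    _ = _ := by rw [ENNReal.tsum_mul_right, ENNReal.tsum_mul_left, ENNReal.tsum_geometric]

theorem holderSemiOn_le_dyadicHolder (hT : 0 < T) {a a' : ℝ} (ha : 0 ≤ a) (haa' : a ≤ a')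
    {f : ℝ → E} (hf : ContinuousOn f (Icc 0 T)) :
    holderSemiOn T a f
      ≤ 2 * (1 - 2 ^ (-a'))⁻¹ * ENNReal.ofReal ((2 / T) ^ a) * dyadicHolder T a' f := by
  refine holderSemiOn_le_of_forall_lt fun s hs t ht hst => ?_
  have hδ : 0 < t - s := sub_pos.2 hst
  obtain ⟨n, hn, hn'⟩ := exists_nat_pow_near
    ((one_le_div hδ).2 (show t - s ≤ T by linarith [hs.1, ht.2])) (one_lt_two : (1 : ℝ) < 2)
  have h2n : (0 : ℝ) < 2 ^ n := by positivity
  have hts : t - s ≤ T / 2 ^ n := by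
    rw [le_div_iff₀ hδ] at hn; rw [le_div_iff₀ h2n]; linarith
  have hscale : (2 : ℝ≥0∞) ^ (-(a' * n))
      ≤ ENNReal.ofReal ((2 / T) ^ a) * ENNReal.ofReal ((t - s) ^ a) := by
    have hinv : ((2 : ℝ) ^ n)⁻¹ ≤ 2 / T * (t - s) := by
      rw [div_lt_iff₀ hδ, pow_succ] at hn'
      rw [inv_le_iff_one_le_mul₀ h2n,
        show 2 / T * (t - s) * 2 ^ n = 2 ^ n * 2 * (t - s) / T by ring, le_div_iff₀ hT]
      linarith
    rw [← ENNReal.ofReal_mul (by positivity), ← ENNReal.ofReal_ofNat 2,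
      ENNReal.ofReal_rpow_of_pos two_pos]
    refine ENNReal.ofReal_le_ofReal ?_
    calc (2 : ℝ) ^ (-(a' * n)) ≤ 2 ^ (-(a * n)) := by
          gcongr
          norm_num
      _ = (((2 : ℝ) ^ n)⁻¹) ^ a := by
          rw [Real.inv_rpow h2n.le, ← Real.rpow_natCast, ← Real.rpow_mul two_pos.le,
            Real.rpow_neg two_pos.le, mul_comm]
      _ ≤ (2 / T * (t - s)) ^ a := by gcongr
      _ = (2 / T) ^ a * (t - s) ^ a := Real.mul_rpow (by positivity) hδ.le
  calc ‖f t - f s‖ₑ ≤ 2 * ∑' m, dyadicIncr T (n + m) f :=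
        enorm_sub_le_two_mul_tsum_dyadicIncr hT hf hs ht hst.le hts
    _ ≤ 2 * (2 ^ (-(a' * n)) * (1 - 2 ^ (-a'))⁻¹ * dyadicHolder T a' f) := by
        gcongr; exact tsum_dyadicIncr_le a' f n
    _ ≤ 2 * (ENNReal.ofReal ((2 / T) ^ a) * ENNReal.ofReal ((t - s) ^ a)
          * (1 - 2 ^ (-a'))⁻¹ * dyadicHolder T a' f) := by gcongr
    _ = _ := by ring

theorem supNormOn_le (hT : 0 ≤ T) {a : ℝ} (ha : 0 ≤ a) (f : ℝ → E) :
    supNormOn T f ≤ ‖f 0‖ₑ + ENNReal.ofReal (T ^ a) * holderSemiOn T a f := by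
  refine iSup₂_le fun t ht => ?_
  calc ‖f t‖ₑ ≤ ‖f 0‖ₑ + ‖f t - f 0‖ₑ := by simpa using enorm_add_le (f 0) (f t - f 0)
    _ ≤ ‖f 0‖ₑ + ENNReal.ofReal (T ^ a) * holderSemiOn T a f := by
        gcongr
        refine (enorm_sub_le_holderSemiOn_mul (r := a) f ht ⟨le_rfl, hT⟩).trans ?_
        rw [mul_comm, sub_zero, abs_of_nonneg ht.1]
        gcongr
        exacts [ht.1, ht.2]

theorem holderNormOn_le_dyadicHolder (hT : 0 < T) {a a' : ℝ} (ha : 0 ≤ a) (haa' : a ≤ a')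
    {f : ℝ → E} (hf : ContinuousOn f (Icc 0 T)) :
    holderNormOn T a f ≤ ‖f 0‖ₑ + (1 + ENNReal.ofReal (T ^ a))
      * (2 * (1 - 2 ^ (-a'))⁻¹ * ENNReal.ofReal ((2 / T) ^ a)) * dyadicHolder T a' f := by
  calc holderNormOn T a f
      ≤ ‖f 0‖ₑ + ENNReal.ofReal (T ^ a) * holderSemiOn T a f + holderSemiOn T a f :=
        add_le_add (supNormOn_le hT.le ha f) le_rfl
    _ = ‖f 0‖ₑ + (1 + ENNReal.ofReal (T ^ a)) * holderSemiOn T a f := by ring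
    _ ≤ _ := by
        rw [mul_assoc]
        gcongr
        exact holderSemiOn_le_dyadicHolder hT ha haa' hf

end DyadicChaining

section Moments

variable {Ω : Type} [MeasurableSpace Ω] {P : Measure Ω} {p : ℝ}

theorem eLpNorm_rpow_eq_lintegral (hp : 0 < p) (f : Ω → ℝ≥0∞) :
    eLpNorm f (ENNReal.ofReal p) P ^ p = ∫⁻ ω, f ω ^ p ∂P := by
  have h := eLpNorm_nnreal_pow_eq_lintegral (f := f) (μ := P) (p := p.toNNReal)
    (by simpa using hp)
  rwa [Real.coe_toNNReal _ hp.le] at h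

theorem eLpNorm_iSup_rpow_le {ι : Type*} [Countable ι] (hp : 0 < p) {g : ι → Ω → ℝ≥0∞}
    (hg : ∀ i, AEMeasurable (g i) P) :
    eLpNorm (fun ω => ⨆ i, g i ω) (ENNReal.ofReal p) P ^ p
      ≤ ∑' i, eLpNorm (g i) (ENNReal.ofReal p) P ^ p := by
  simp only [eLpNorm_rpow_eq_lintegral hp]
  rw [← lintegral_tsum fun i => (hg i).pow_const p]
  refine lintegral_mono fun ω => (le_rpow_inv_iff hp).1 <|
    iSup_le fun i => (le_rpow_inv_iff hp).2 (ENNReal.le_tsum i)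

end Moments

theorem dyadic_weight_eq {T a b p : ℝ} (hT : 0 < T) (hp : 0 ≤ p) (n : ℕ) :
    ((2 : ℝ≥0∞) ^ (a * n)) ^ p * (2 ^ n * ENNReal.ofReal ((T / 2 ^ n) ^ b) ^ p)
      = ENNReal.ofReal (T ^ (b * p)) * (2 ^ (a * p + 1 - b * p)) ^ n := by
  have h2 : (0 : ℝ) < 2 := two_pos
  rw [← ENNReal.ofReal_ofNat 2, ENNReal.ofReal_rpow_of_pos h2,
    ENNReal.ofReal_rpow_of_pos (by positivity),
    ENNReal.ofReal_rpow_of_nonneg (by positivity) hp, ← ENNReal.ofReal_pow h2.le,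
    ENNReal.ofReal_rpow_of_pos h2, ← ENNReal.ofReal_pow (by positivity),
    ← ENNReal.ofReal_mul (by positivity), ← ENNReal.ofReal_mul (by positivity),
    ← ENNReal.ofReal_mul (by positivity)]
  congr 1
  rw [← Real.rpow_mul h2.le, ← Real.rpow_mul (by positivity),
    Real.div_rpow hT.le (by positivity), ← Real.rpow_natCast, ← Real.rpow_natCast,
    ← Real.rpow_mul h2.le, ← Real.rpow_mul h2.le,
    div_eq_mul_inv, ← Real.rpow_neg h2.le,
    show ∀ x y z w : ℝ, x * (y * (w * z)) = w * (x * y * z) by intros; ring,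
    ← Real.rpow_add h2, ← Real.rpow_add h2]
  congr 2
  ring

section Kolmogorov

variable {Ω E : Type} [MeasurableSpace Ω] [NormedAddCommGroup E] {P : Measure Ω}
  {T p : ℝ} {X : ℝ → Ω → E}

theorem dyadic_grid_mem_Icc (hT : 0 < T) {n : ℕ} (k : Fin (2 ^ n)) :
    ((k : ℝ) + 1) * T / 2 ^ n ∈ Icc 0 T ∧ (k : ℝ) * T / 2 ^ n ∈ Icc 0 T := by
  have hk : (k : ℝ) + 1 ≤ 2 ^ n := by exact_mod_cast Nat.succ_le_of_lt k.2
  have h2 : (0 : ℝ) < 2 ^ n := by positivity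
  refine ⟨⟨by positivity, ?_⟩, ⟨by positivity, ?_⟩⟩ <;>
    rw [div_le_iff₀ h2] <;> nlinarith

theorem aemeasurable_dyadicIncr (hT : 0 < T)
    (hX : ∀ t ∈ Icc 0 T, AEStronglyMeasurable (X t) P) (n : ℕ) :
    AEMeasurable (fun ω => dyadicIncr T n (X · ω)) P :=
  AEMeasurable.iSup fun k =>
    ((hX _ (dyadic_grid_mem_Icc hT k).1).sub (hX _ (dyadic_grid_mem_Icc hT k).2)).enorm

theorem eLpNorm_dyadicIncr_rpow_le (hT : 0 < T) (hp : 0 < p)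
    (hX : ∀ t ∈ Icc 0 T, AEStronglyMeasurable (X t) P) (b : ℝ) (n : ℕ) :
    eLpNorm (fun ω => dyadicIncr T n (X · ω)) (ENNReal.ofReal p) P ^ p
      ≤ 2 ^ n * (lpHolderSemi P T p b X * ENNReal.ofReal ((T / 2 ^ n) ^ b)) ^ p := by
  refine (eLpNorm_iSup_rpow_le hp fun k => ((hX _ (dyadic_grid_mem_Icc hT k).1).sub
    (hX _ (dyadic_grid_mem_Icc hT k).2)).enorm).trans ?_
  rw [tsum_fintype]
  calc _ ≤ ∑ _k : Fin (2 ^ n),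
          (lpHolderSemi P T p b X * ENNReal.ofReal ((T / 2 ^ n) ^ b)) ^ p := by
        refine Finset.sum_le_sum fun k _ => ?_
        rw [eLpNorm_enorm]
        gcongr
        refine (eLpNorm_sub_le_lpHolderSemi_mul (r := b) X (dyadic_grid_mem_Icc hT k).1
          (dyadic_grid_mem_Icc hT k).2).trans_eq ?_
        congr 3
        rw [← sub_div, ← sub_mul, add_sub_cancel_left, one_mul, abs_of_pos (by positivity)]
    _ = _ := by simp

theorem eLpNorm_dyadicHolder_le (hT : 0 < T) (hp : 0 < p)
    (hX : ∀ t ∈ Icc 0 T, AEStronglyMeasurable (X t) P) (a b : ℝ) :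
    eLpNorm (fun ω => dyadicHolder T a (X · ω)) (ENNReal.ofReal p) P
      ≤ lpHolderSemi P T p b X
        * (ENNReal.ofReal (T ^ (b * p)) * (1 - 2 ^ (a * p + 1 - b * p))⁻¹) ^ p⁻¹ := by
  set H := lpHolderSemi P T p b X
  rw [← ENNReal.rpow_rpow_inv hp.ne' H, ← ENNReal.mul_rpow_of_nonneg _ _ (inv_nonneg.2 hp.le),
    le_rpow_inv_iff hp]
  calc eLpNorm (fun ω => dyadicHolder T a (X · ω)) (ENNReal.ofReal p) P ^ p
      ≤ ∑' n : ℕ, eLpNorm (fun ω => (2 : ℝ≥0∞) ^ (a * n) * dyadicIncr T n (X · ω))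
          (ENNReal.ofReal p) P ^ p :=
        eLpNorm_iSup_rpow_le hp fun n => (aemeasurable_dyadicIncr hT hX n).const_mul _
    _ ≤ ∑' n : ℕ, ((2 : ℝ≥0∞) ^ (a * n)) ^ p
          * (2 ^ n * (H * ENNReal.ofReal ((T / 2 ^ n) ^ b)) ^ p) := by
        refine ENNReal.tsum_le_tsum fun n => ?_
        calc _ ≤ ((2 : ℝ≥0∞) ^ (a * n)
                * eLpNorm (fun ω => dyadicIncr T n (X · ω)) (ENNReal.ofReal p) P) ^ p := by
              gcongr
              exact eLpNorm_le_mul_eLpNorm_of_ae_le_mul'' _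
                (aemeasurable_dyadicIncr hT hX n).aestronglyMeasurable
                (Eventually.of_forall fun ω => le_rfl)
          _ ≤ _ := by
              rw [ENNReal.mul_rpow_of_nonneg _ _ hp.le]
              gcongr
              exact eLpNorm_dyadicIncr_rpow_le hT hp hX b n
    _ = ∑' n : ℕ,
          H ^ p * (ENNReal.ofReal (T ^ (b * p)) * (2 ^ (a * p + 1 - b * p)) ^ n) := by
        congr 1; funext n
        rw [ENNReal.mul_rpow_of_nonneg _ _ hp.le, ← dyadic_weight_eq hT hp.le]
        ring
    _ = _ := by
        rw [ENNReal.tsum_mul_left, ENNReal.tsum_mul_left, ENNReal.tsum_geometric]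

theorem lpOfHolderNorm_eq_eLpNorm (hp : 0 < p) (r : ℝ) (X : ℝ → Ω → E) :
    lpOfHolderNorm P T p r X
      = eLpNorm (fun ω => holderNormOn T r (X · ω)) (ENNReal.ofReal p) P := by
  rw [lpOfHolderNorm, ← eLpNorm_rpow_eq_lintegral hp, one_div, ENNReal.rpow_rpow_inv hp.ne']

theorem one_sub_two_rpow_inv_ne_top {x : ℝ} (hx : x < 0) : (1 - (2 : ℝ≥0∞) ^ x)⁻¹ ≠ ⊤ :=
  ENNReal.inv_ne_top.2
    (tsub_pos_of_lt (ENNReal.rpow_lt_one_of_one_lt_of_neg one_lt_two hx)).ne'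

theorem exists_lpOfHolderNorm_le (P : Measure Ω) (hT : 0 < T) (hp : 1 ≤ p) {a b : ℝ}
    (ha : 0 ≤ a) (hab : a + 1 / p < b) :
    ∃ C : ℝ≥0∞, C ≠ ⊤ ∧ ∀ X : ℝ → Ω → E, (∀ t ∈ Icc 0 T, AEStronglyMeasurable (X t) P) →
      (∀ ω, ContinuousOn (fun t => X t ω) (Icc 0 T)) →
      lpOfHolderNorm P T p a X
        ≤ C * (eLpNorm (X 0) (ENNReal.ofReal p) P + lpHolderSemi P T p b X) := by
  have hp0 : 0 < p := by linarith
  -- chaining at an exponent `a' ∈ (a, b - 1/p)` makes the series of dyadic moments geometric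
  obtain ⟨a', haa', ha'b⟩ : ∃ a', a < a' ∧ a' + 1 / p < b :=
    ⟨(a + b - 1 / p) / 2, by linarith, by linarith⟩
  have hgeo : a' * p + 1 - b * p < 0 := by
    have := mul_neg_of_neg_of_pos (sub_neg.2 ha'b) hp0
    rw [sub_mul, add_mul, one_div_mul_cancel hp0.ne'] at this
    linarith
  set C₀ := (1 + ENNReal.ofReal (T ^ a))
    * (2 * (1 - 2 ^ (-a'))⁻¹ * ENNReal.ofReal ((2 / T) ^ a))
  set Cₘ := (ENNReal.ofReal (T ^ (b * p)) * (1 - 2 ^ (a' * p + 1 - b * p))⁻¹) ^ p⁻¹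
  have hC₀ : C₀ ≠ ⊤ := by
    have := one_sub_two_rpow_inv_ne_top (x := -a') (by linarith)
    finiteness
  have hCₘ : Cₘ ≠ ⊤ := by
    have := one_sub_two_rpow_inv_ne_top hgeo
    exact ENNReal.rpow_ne_top_of_nonneg (inv_nonneg.2 hp0.le) (by finiteness)
  refine ⟨1 + C₀ * Cₘ, by finiteness, fun X hX hXc => ?_⟩
  have hX0 := hX 0 ⟨le_rfl, hT.le⟩
  have hS := AEMeasurable.iSup fun n : ℕ =>
    (aemeasurable_dyadicIncr hT hX n).const_mul ((2 : ℝ≥0∞) ^ (a' * n))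
  rw [lpOfHolderNorm_eq_eLpNorm hp0]
  calc eLpNorm (fun ω => holderNormOn T a (X · ω)) (ENNReal.ofReal p) P
      ≤ eLpNorm (fun ω => ‖X 0 ω‖ₑ + C₀ * dyadicHolder T a' (X · ω)) (ENNReal.ofReal p) P :=
        eLpNorm_mono_enorm fun ω => holderNormOn_le_dyadicHolder hT ha haa'.le (hXc ω)
    _ ≤ eLpNorm (X 0) (ENNReal.ofReal p) P
          + C₀ * eLpNorm (fun ω => dyadicHolder T a' (X · ω)) (ENNReal.ofReal p) P := by
        refine (eLpNorm_add_le hX0.enorm.aestronglyMeasurable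
          (hS.const_mul C₀).aestronglyMeasurable (by simpa using hp)).trans ?_
        rw [eLpNorm_enorm]
        gcongr
        exact eLpNorm_le_mul_eLpNorm_of_ae_le_mul'' _ hS.aestronglyMeasurable
          (Eventually.of_forall fun ω => le_rfl)
    _ ≤ eLpNorm (X 0) (ENNReal.ofReal p) P + C₀ * (lpHolderSemi P T p b X * Cₘ) := by
        gcongr; exact eLpNorm_dyadicHolder_le hT hp0 hX a' b
    _ = eLpNorm (X 0) (ENNReal.ofReal p) P + C₀ * Cₘ * lpHolderSemi P T p b X := by ring
    _ ≤ (1 + C₀ * Cₘ) * (eLpNorm (X 0) (ENNReal.ofReal p) P + lpHolderSemi P T p b X) := by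
        rw [add_mul, one_mul, mul_add]
        exact add_le_add le_self_add le_add_self

end Kolmogorov

theorem le_mul_ofReal_rpow_of_ofReal_rpow_neg_mul_le {d β : ℝ} {x B : ℝ≥0∞} (hd : 0 < d)
    (h : ENNReal.ofReal (d ^ (-β)) * x ≤ B) : x ≤ B * ENNReal.ofReal (d ^ β) := by
  calc x = ENNReal.ofReal (d ^ (-β)) * x * ENNReal.ofReal (d ^ β) := by
        rw [mul_comm _ x, mul_assoc, ← ENNReal.ofReal_mul (by positivity),
          ← Real.rpow_add hd, neg_add_cancel, Real.rpow_zero, ENNReal.ofReal_one, mul_one]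
    _ ≤ B * ENNReal.ofReal (d ^ β) := by gcongr

theorem ofReal_rpow_neg_mul_ofReal_rpow_le {d T γ x : ℝ} (hd : 0 < d) (hdT : d ≤ T)
    (hγx : γ ≤ x) :
    ENNReal.ofReal (d ^ (-γ)) * ENNReal.ofReal (d ^ x) ≤ ENNReal.ofReal (T ^ (x - γ)) := by
  rw [← ENNReal.ofReal_mul (by positivity), ← Real.rpow_add hd, neg_add_eq_sub]
  exact ENNReal.ofReal_le_ofReal (Real.rpow_le_rpow hd.le hdT (by linarith))

section Rate

variable {Ω E : Type} [MeasurableSpace Ω] [NormedAddCommGroup E] {P : Measure Ω}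
  {T p α β β' γ : ℝ} {K : ℕ} {θ : ℕ → ℝ} {X Y Z : ℝ → Ω → E} {B H Λ C₁ C₂ : ℝ≥0∞}

theorem rpow_neg_mul_le_of_small_at_nodes (hθ : IsPartition T K θ) (hp : 1 ≤ p)
    (hβ' : 0 < β') (hβ'β : β' ≤ β) (hγ : γ ≤ β - β')
    (hZ : ∀ t ∈ Icc 0 T, AEStronglyMeasurable (Z t) P)
    (hpair : ∀ s ∈ Icc 0 T, ∀ t ∈ Icc 0 T,
      eLpNorm (Z s - Z t) (ENNReal.ofReal p) P ≤ H * ENNReal.ofReal (|s - t| ^ β))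
    (hnode : ∀ j ≤ K, eLpNorm (Z (θ j)) (ENNReal.ofReal p) P
      ≤ Λ * ENNReal.ofReal (dMax K θ ^ β)) :
    ENNReal.ofReal (dMax K θ ^ (-γ))
        * (eLpNorm (Z 0) (ENNReal.ofReal p) P + lpHolderSemi P T p β' Z)
      ≤ Λ * ENNReal.ofReal (T ^ (β - γ))
        + 2 * (H + Λ) * ENNReal.ofReal (T ^ (β - β' - γ)) := by
  have hd := hθ.dMax_pos
  calc ENNReal.ofReal (dMax K θ ^ (-γ))
        * (eLpNorm (Z 0) (ENNReal.ofReal p) P + lpHolderSemi P T p β' Z)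
      ≤ ENNReal.ofReal (dMax K θ ^ (-γ)) * (Λ * ENNReal.ofReal (dMax K θ ^ β)
          + 2 * (H + Λ) * ENNReal.ofReal (dMax K θ ^ (β - β'))) := by
        gcongr
        · simpa [hθ.zero] using hnode 0 (Nat.zero_le K)
        · exact lpHolderSemi_le_of_small_at_nodes hθ hp hβ' hβ'β hZ hpair hnode
    _ = Λ * (ENNReal.ofReal (dMax K θ ^ (-γ)) * ENNReal.ofReal (dMax K θ ^ β))
          + 2 * (H + Λ) * (ENNReal.ofReal (dMax K θ ^ (-γ))
            * ENNReal.ofReal (dMax K θ ^ (β - β'))) := by ring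
    _ ≤ _ := by
        gcongr
        · exact ofReal_rpow_neg_mul_ofReal_rpow_le hd hθ.dMax_le (by linarith)
        · exact ofReal_rpow_neg_mul_ofReal_rpow_le hd hθ.dMax_le hγ

theorem lpOfHolderNorm_add_rate_le (hθ : IsPartition T K θ) (hp : 1 ≤ p) (hβ' : 0 < β')
    (hβ'β : β' ≤ β) (hγ : γ ≤ β - β')
    (hX : ∀ t ∈ Icc 0 T, AEStronglyMeasurable (X t) P)
    (hY : ∀ t ∈ Icc 0 T, AEStronglyMeasurable (Y t) P)
    (hnode : ∀ j ≤ K, eLpNorm (X (θ j) - Y (θ j)) (ENNReal.ofReal p) P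
      ≤ B * ENNReal.ofReal (dMax K θ ^ β))
    (hYH : lpHolderSemi P T p β Y ≤ H)
    (hK₁ : lpOfHolderNorm P T p α Y
      ≤ C₁ * (eLpNorm (Y 0) (ENNReal.ofReal p) P + lpHolderSemi P T p β Y))
    (hK₂ : lpOfHolderNorm P T p α (X - Y)
      ≤ C₂ * (eLpNorm ((X - Y) 0) (ENNReal.ofReal p) P + lpHolderSemi P T p β' (X - Y))) :
    lpOfHolderNorm P T p α Y
        + ENNReal.ofReal (dMax K θ ^ (-γ)) * lpOfHolderNorm P T p α (X - Y)
      ≤ C₁ * (eLpNorm (X 0) (ENNReal.ofReal p) P + B * ENNReal.ofReal (T ^ β) + H)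
        + C₂ * (B * ENNReal.ofReal (T ^ (β - γ))
          + 2 * (lpHolderSemi P T p β X + H + B) * ENNReal.ofReal (T ^ (β - β' - γ))) := by
  have h0 : (0 : ℝ) ∈ Icc 0 T := hθ.zero ▸ hθ.mem_Icc (Nat.zero_le K)
  have hβ : 0 ≤ β := by linarith
  have hY0 : eLpNorm (Y 0) (ENNReal.ofReal p) P
      ≤ eLpNorm (X 0) (ENNReal.ofReal p) P + B * ENNReal.ofReal (T ^ β) :=
    calc eLpNorm (Y 0) (ENNReal.ofReal p) P
        = eLpNorm (X 0 - (X 0 - Y 0)) (ENNReal.ofReal p) P := by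
          rw [sub_sub_cancel _ (Y 0)]
      _ ≤ eLpNorm (X 0) (ENNReal.ofReal p) P + eLpNorm (X 0 - Y 0) (ENNReal.ofReal p) P :=
          eLpNorm_sub_le (hX 0 h0) ((hX 0 h0).sub (hY 0 h0)) (by simpa using hp)
      _ ≤ _ := by
          gcongr
          simpa [hθ.zero] using (hnode 0 (Nat.zero_le _)).trans (by
            gcongr B * ENNReal.ofReal ?_
            exact Real.rpow_le_rpow hθ.dMax_pos.le hθ.dMax_le hβ)
  have hZ : ∀ t ∈ Icc 0 T, AEStronglyMeasurable ((X - Y) t) P :=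
    fun t ht => (hX t ht).sub (hY t ht)
  refine add_le_add (hK₁.trans (by gcongr)) ?_
  calc ENNReal.ofReal (dMax K θ ^ (-γ)) * lpOfHolderNorm P T p α (X - Y)
      ≤ ENNReal.ofReal (dMax K θ ^ (-γ)) * (C₂ * (eLpNorm ((X - Y) 0)
          (ENNReal.ofReal p) P + lpHolderSemi P T p β' (X - Y))) := by gcongr
    _ = C₂ * (ENNReal.ofReal (dMax K θ ^ (-γ)) * (eLpNorm ((X - Y) 0)
          (ENNReal.ofReal p) P + lpHolderSemi P T p β' (X - Y))) := by ring
    _ ≤ _ := by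
        gcongr
        refine rpow_neg_mul_le_of_small_at_nodes hθ hp hβ' hβ'β hγ hZ (fun s hs t ht =>
          (eLpNorm_sub_le_lpHolderSemi_mul (r := β) _ hs ht).trans ?_) hnode
        gcongr
        exact (lpHolderSemi_sub_le hp hX hY).trans (by gcongr)

end Rate

theorem cor_hoelder3_general
    {Ω E : Type} [MeasurableSpace Ω] [NormedAddCommGroup E] [NormedSpace ℝ E]
    (T : ℝ) (hT : 0 < T) (p β : ℝ) (hp : 1 < p) (hβ : β ∈ Set.Ioc (1 / p) 1)
    (K : ℕ → ℕ) (θ : ℕ → ℕ → ℝ)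
    (hpart : ∀ N, 1 ≤ N → 1 ≤ K N ∧ θ N 0 = 0 ∧ θ N (K N) = T ∧
        ∀ j, j < K N → θ N j < θ N (j + 1))
    (P : Measure Ω)
    (Y : ℕ → ℝ → Ω → E)
    (hYmeas : ∀ N, ∀ t ∈ Set.Icc (0:ℝ) T, StronglyMeasurable (Y N t))
    (hYcont : ∀ N ω, ContinuousOn (fun t => Y N t ω) (Set.Icc (0:ℝ) T))
    (hY00 : MemLp (Y 0 0) (ENNReal.ofReal p) P)
    (hbdd :
      lpHolderSemi P T p β (Y 0)
        + (⨆ (N : ℕ) (_ : 1 ≤ N),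
            ENNReal.ofReal ((dMax (K N) (θ N)) ^ (-β)) *
              ⨆ j : Fin (K N + 1),
                eLpNorm (fun ω => Y 0 (θ N j) ω - Y N (θ N j) ω)
                  (ENNReal.ofReal p) P)
        < ⊤)
    (halt :
      ((⨆ (N : ℕ) (_ : 1 ≤ N), lpHolderSemi P T p β (Y N)) < ⊤)
      ∨
      ((∃ c : ℝ, ∀ N, 1 ≤ N → dMax (K N) (θ N) / dMin (K N) (θ N) ≤ c)
        ∧ (∀ N, 1 ≤ N → ∀ ω, ∀ j, j < K N →
            ∀ s ∈ Set.Icc (θ N j) (θ N (j + 1)),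
              Y N s ω
                = ((θ N (j + 1) - s) / (θ N (j + 1) - θ N j)) • Y N (θ N j) ω
                  + ((s - θ N j) / (θ N (j + 1) - θ N j)) •
                      Y N (θ N (j + 1)) ω))) :
    ∀ α ∈ Set.Ico (0:ℝ) (β - 1 / p), ∀ ε : ℝ, 0 < ε →
      (⨆ (N : ℕ) (_ : 1 ≤ N),
          (lpOfHolderNorm P T p α (Y N)
            + ENNReal.ofReal ((dMax (K N) (θ N)) ^ (-(β - α - 1 / p - ε))) *
                lpOfHolderNorm P T p α (fun t ω => Y 0 t ω - Y N t ω)))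
        < ⊤ := by
  intro α hα ε hε
  have hθ : ∀ N, 1 ≤ N → IsPartition T (K N) (θ N) := fun N hN =>
    ⟨(hpart N hN).1, (hpart N hN).2.1, (hpart N hN).2.2.1, (hpart N hN).2.2.2⟩
  have hp1 : 1 ≤ p := hp.le
  have hβ0 : 0 < β := (one_div_pos.2 (by linarith)).trans hβ.1
  have hY : ∀ N, ∀ t ∈ Icc 0 T, AEStronglyMeasurable (Y N t) P :=
    fun N t ht => (hYmeas N t ht).aestronglyMeasurable
  obtain ⟨hY0H, hnodes⟩ := ENNReal.add_lt_top.1 hbdd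
  obtain ⟨B, hB, hnode⟩ : ∃ B < ⊤, ∀ N, 1 ≤ N → ∀ j ≤ K N,
      eLpNorm (Y 0 (θ N j) - Y N (θ N j)) (ENNReal.ofReal p) P
        ≤ B * ENNReal.ofReal (dMax (K N) (θ N) ^ β) :=
    ⟨_, hnodes, fun N hN j hj => le_mul_ofReal_rpow_of_ofReal_rpow_neg_mul_le
      (hθ N hN).dMax_pos (le_iSup₂_of_le N hN (by
        gcongr; exact le_iSup_of_le (⟨j, by omega⟩ : Fin (K N + 1)) le_rfl))⟩
  obtain ⟨H, hH, hYN⟩ : ∃ H < ⊤, ∀ N, 1 ≤ N → lpHolderSemi P T p β (Y N) ≤ H := by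
    rcases halt with h | ⟨⟨c, hc⟩, haff⟩
    · exact ⟨_, h, fun N hN =>
        le_iSup₂ (f := fun N (_ : 1 ≤ N) => lpHolderSemi P T p β (Y N)) N hN⟩
    · exact ⟨3 * (lpHolderSemi P T p β (Y 0) + 2 * B * ENNReal.ofReal (c ^ β)), by finiteness,
        fun N hN => lpHolderSemi_le_of_piecewise_affine (hθ N hN) hp1 hβ0.le hβ.2 (hc N hN)
          (hY 0) (hY N) (fun s hs t ht => eLpNorm_sub_le_lpHolderSemi_mul _ hs ht) (hnode N hN)
          (haff N hN)⟩
  obtain ⟨β', hαβ', hβ'β, hγ⟩ :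
      ∃ β', α + 1 / p < β' ∧ β' ≤ β ∧ β - α - 1 / p - ε ≤ β - β' :=
    ⟨α + 1 / p + min ε (β - 1 / p - α), by linarith [lt_min hε (sub_pos.2 (hα.2))],
      by linarith [min_le_right ε (β - 1 / p - α)], by linarith [min_le_left ε (β - 1 / p - α)]⟩
  obtain ⟨C₁, hC₁, hKol₁⟩ :=
    exists_lpOfHolderNorm_le (E := E) P hT hp1 hα.1 (show α + 1 / p < β by linarith [hα.2])
  obtain ⟨C₂, hC₂, hKol₂⟩ := exists_lpOfHolderNorm_le (E := E) P hT hp1 hα.1 hαβ'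
  refine lt_of_le_of_lt (iSup₂_le fun N hN => lpOfHolderNorm_add_rate_le (hθ N hN) hp1
    (by linarith [hα.1, one_div_pos.2 (by linarith : (0 : ℝ) < p)]) hβ'β hγ (hY 0) (hY N)
    (hnode N hN) (hYN N hN) (hKol₁ (Y N) (hY N) (hYcont N))
    (hKol₂ _ (fun t ht => (hY 0 t ht).sub (hY N t ht)) fun ω =>
      (hYcont 0 ω).sub (hYcont N ω))) (by finiteness)

/-- **Corollary 2.11** (convergence rates with respect to Hölder norms). -/
theorem cor_hoelder3
    {Ω E : Type} [MeasurableSpace Ω] [NormedAddCommGroup E] [NormedSpace ℝ E]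
    [CompleteSpace E]
    (T : ℝ) (hT : 0 < T) (p β : ℝ) (hp : 1 < p) (hβ : β ∈ Set.Ioc (1 / p) 1)
    (K : ℕ → ℕ) (θ : ℕ → ℕ → ℝ)
    (hpart : ∀ N, 1 ≤ N → 1 ≤ K N ∧ θ N 0 = 0 ∧ θ N (K N) = T ∧
        ∀ j, j < K N → θ N j < θ N (j + 1))
    (hmesh : Filter.limsup (fun N => dMax (K N) (θ N)) Filter.atTop = 0)
    (P : Measure Ω) [IsProbabilityMeasure P]
    (Y : ℕ → ℝ → Ω → E)
    (hYmeas : ∀ N, ∀ t ∈ Set.Icc (0:ℝ) T, StronglyMeasurable (Y N t))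
    (hYcont : ∀ N ω, ContinuousOn (fun t => Y N t ω) (Set.Icc (0:ℝ) T))
    (hY00 : MemLp (Y 0 0) (ENNReal.ofReal p) P)
    (hbdd :
      lpHolderSemi P T p β (Y 0)
        + (⨆ (N : ℕ) (_ : 1 ≤ N),
            ENNReal.ofReal ((dMax (K N) (θ N)) ^ (-β)) *
              ⨆ j : Fin (K N + 1),
                eLpNorm (fun ω => Y 0 (θ N j) ω - Y N (θ N j) ω)
                  (ENNReal.ofReal p) P)
        < ⊤)
    (halt :
      ((⨆ (N : ℕ) (_ : 1 ≤ N), lpHolderSemi P T p β (Y N)) < ⊤)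
      ∨
      ((∃ c : ℝ, ∀ N, 1 ≤ N → dMax (K N) (θ N) / dMin (K N) (θ N) ≤ c)
        ∧ (∀ N, 1 ≤ N → ∀ ω, ∀ j, j < K N →
            ∀ s ∈ Set.Icc (θ N j) (θ N (j + 1)),
              Y N s ω
                = ((θ N (j + 1) - s) / (θ N (j + 1) - θ N j)) • Y N (θ N j) ω
                  + ((s - θ N j) / (θ N (j + 1) - θ N j)) •
                      Y N (θ N (j + 1)) ω))) :
    ∀ α ∈ Set.Ico (0:ℝ) (β - 1 / p), ∀ ε : ℝ, 0 < ε →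
      (⨆ (N : ℕ) (_ : 1 ≤ N),
          (lpOfHolderNorm P T p α (Y N)
            + ENNReal.ofReal ((dMax (K N) (θ N)) ^ (-(β - α - 1 / p - ε))) *
                lpOfHolderNorm P T p α (fun t ω => Y 0 t ω - Y N t ω)))
        < ⊤ :=
  cor_hoelder3_general T hT p β hp hβ K θ hpart P Y hYmeas hYcont hY00 hbdd halt
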